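/- Let F be a monic real polynomial of degree n ≥ 2 (viewed as a smooth function on an open interval I ⊆ ℝ) and let x be a smooth function on I satisfying Op_n[F]x = 0. Define b_k(a) = ∑_{s=1}^{k} F^{(k-s)}(a)/(k-s)! · x^{(s)}(a)/(1/2)_s for 1 ≤ k ≤ n. Then on I: b₁ = 2 F x′; b_k′ = (k + 1/2) b_{k+1} − (F^{(k)}/k!) x′ for 1 ≤ k ≤ n−1; and b_n′ = −x′. -/

import Mathlib

open Polynomial

/-- The Pochhammer symbol `(1/2)_s`. -/
noncomputable def poch (s : ℕ) : ℝ := (ascPochhammer ℝ s).eval (1/2 : ℝ)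

/-- The operator `Op_n[F]` acting on `h`, with derivatives taken within the set `I`. -/
noncomputable def OpW (I : Set ℝ) (n : ℕ) (F h : ℝ → ℝ) (a : ℝ) : ℝ :=
  ∑ s ∈ Finset.range (n + 1),
    iteratedDerivWithin (n - s) F I a / (Nat.factorial (n - s) : ℝ) *
      (iteratedDerivWithin s h I a / poch s)

/-- The coefficient `b_k(a) = ∑_{s=1}^{k} F^{(k-s)}(a)/(k-s)! · x^{(s)}(a)/(1/2)_s`,
with derivatives taken within the set `I`. -/
noncomputable def bfun (I : Set ℝ) (F x : ℝ → ℝ) (k : ℕ) (a : ℝ) : ℝ :=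
  ∑ s ∈ Finset.Icc 1 k,
    iteratedDerivWithin (k - s) F I a / (Nat.factorial (k - s) : ℝ) *
      (iteratedDerivWithin s x I a / poch s)

open Finset Nat

/-! Differentiating `b_k` termwise by the product rule gives two sums. Splitting
`k + 1/2 = (k - t) + (t + 1/2)` in `(k + 1/2) b_{k+1}` and using
`(m + 1) / (m + 1)! = 1 / m!` and `(t + 1/2) / (1/2)_{t+1} = 1 / (1/2)_t` matches them term by
term, except for the boundary term `F^{(k)}/k! · x′`. The equation `Op_n[F] x = 0` reads
`b_n + F^{(n)}/n! · x = 0`, and `F^{(n)} = n!` for monic `F` of degree `n`, so `b_n = -x`. -/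

lemma poch_zero : poch 0 = 1 := by simp [poch]

lemma poch_succ (s : ℕ) : poch (s + 1) = poch s * ((s : ℝ) + 1/2) := by
  simp only [poch, ascPochhammer_succ_right, eval_mul, eval_add, eval_X, eval_natCast]
  ring

lemma poch_one : poch 1 = 1/2 := by
  simpa [poch_zero] using poch_succ 0

lemma poch_pos (s : ℕ) : 0 < poch s := by
  induction s with
  | zero => simp [poch_zero]
  | succ m ih => rw [poch_succ]; positivity

lemma sum_Icc_one_eq_sum_range {M : Type*} [AddCommMonoid M] (m : ℕ) (h : ℕ → M) :
    ∑ s ∈ Icc 1 m, h s = ∑ t ∈ range m, h (t + 1) := by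
  rw [← Ico_add_one_right_eq_Icc, sum_Ico_eq_sum_range]
  simp [add_comm]

lemma natCast_succ_mul_div_factorial_succ (m : ℕ) (y : ℝ) :
    ((m + 1 : ℕ) : ℝ) * (y / (m + 1)!) = y / m ! := by
  rw [factorial_succ, cast_mul]
  field_simp

lemma sum_leibniz_terms_eq (k : ℕ) (Fd xd : ℕ → ℝ) :
    ∑ s ∈ Icc 1 k,
        (Fd (k - s + 1) / (k - s)! * (xd s / poch s) +
          Fd (k - s) / (k - s)! * (xd (s + 1) / poch s)) =
      ((k : ℝ) + 1/2) * ∑ s ∈ Icc 1 (k + 1), Fd (k + 1 - s) / (k + 1 - s)! * (xd s / poch s) -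
        Fd k / k ! * xd 1 := by
  set c : ℕ → ℝ := fun m => Fd m / (m !)
  have hsplit : ∀ t ∈ range (k + 1),
      ((k : ℝ) + 1/2) * (c (k - t) * (xd (t + 1) / poch (t + 1))) =
        ((k - t : ℕ) : ℝ) * c (k - t) * (xd (t + 1) / poch (t + 1)) +
          c (k - t) * (xd (t + 1) / poch t) := by
    intro t ht
    have hp := (poch_pos t).ne'
    rw [cast_sub (by simpa [Nat.lt_succ_iff] using ht), poch_succ]
    field_simp
    ring
  have hdrop : ∀ t ∈ range k,
      ((k - t : ℕ) : ℝ) * c (k - t) = Fd (k - (t + 1) + 1) / (k - (t + 1))! := by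
    intro t ht
    obtain ⟨m, hm⟩ : ∃ m, k - t = m + 1 := ⟨k - (t + 1), by have := mem_range.mp ht; omega⟩
    rw [hm, show k - (t + 1) = m by omega]
    exact natCast_succ_mul_div_factorial_succ m (Fd (m + 1))
  simp only [sum_Icc_one_eq_sum_range, Nat.add_sub_add_right]
  rw [mul_sum, sum_congr rfl hsplit, sum_add_distrib, sum_add_distrib, sum_range_succ,
    sum_range_succ' (fun t => c (k - t) * (xd (t + 1) / poch t))]
  simp only [Nat.sub_self, cast_zero, zero_mul, add_zero, poch_zero, div_one, Nat.sub_zero]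
  rw [sum_congr rfl fun t ht => congrArg (· * (xd (t + 1) / poch (t + 1))) (hdrop t ht)]
  simp only [c, zero_add]
  ring

namespace Polynomial

lemma iteratedDeriv_eval {𝕜 : Type*} [NontriviallyNormedField 𝕜] (p : 𝕜[X]) (m : ℕ) :
    iteratedDeriv m (fun t => p.eval t) = fun t => (derivative^[m] p).eval t := by
  induction m generalizing p with
  | zero => rfl
  | succ m ih =>
    rw [iteratedDeriv_succ', _root_.funext fun t => p.deriv (x := t), ih,
      Function.iterate_succ_apply]

lemma iterate_derivative_natDegree {R : Type*} [CommSemiring R] (p : R[X]) :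
    derivative^[p.natDegree] p = C (p.leadingCoeff * p.natDegree !) := by
  rw [eq_C_of_natDegree_le_zero (p := derivative^[p.natDegree] p)
      (by have := natDegree_iterate_derivative p p.natDegree; omega),
    coeff_iterate_derivative, zero_add, descFactorial_self, nsmul_eq_mul, mul_comm]
  rfl

lemma iteratedDerivWithin_eval_natDegree {𝕜 : Type*} [NontriviallyNormedField 𝕜] {s : Set 𝕜}
    (hs : IsOpen s) (p : 𝕜[X]) {a : 𝕜} (ha : a ∈ s) :
    iteratedDerivWithin p.natDegree (fun t => p.eval t) s a = p.leadingCoeff * p.natDegree ! := by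
  rw [iteratedDerivWithin_of_isOpen hs ha, iteratedDeriv_eval, iterate_derivative_natDegree]
  exact eval_C

end Polynomial

lemma hasDerivWithinAt_iteratedDerivWithin {𝕜 E : Type*} [NontriviallyNormedField 𝕜]
    [NormedAddCommGroup E] [NormedSpace 𝕜 E] {s : Set 𝕜} (hs : UniqueDiffOn 𝕜 s) {g : 𝕜 → E}
    {n : WithTop ℕ∞} (hg : ContDiffOn 𝕜 n g s) {m : ℕ} (hm : (m : WithTop ℕ∞) < n) {a : 𝕜}
    (ha : a ∈ s) :
    HasDerivWithinAt (iteratedDerivWithin m g s) (iteratedDerivWithin (m + 1) g s a) s a := by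
  rw [iteratedDerivWithin_succ]
  exact ((hg.differentiableOn_iteratedDerivWithin hm hs) a ha).hasDerivWithinAt

section Calculus

variable {I : Set ℝ}

lemma hasDerivWithinAt_bfun (hI : UniqueDiffOn ℝ I) {f x : ℝ → ℝ}
    (hf : ContDiffOn ℝ (⊤ : ℕ∞) f I) (hx : ContDiffOn ℝ (⊤ : ℕ∞) x I) (k : ℕ) {a : ℝ}
    (ha : a ∈ I) :
    HasDerivWithinAt (bfun I f x k)
      (∑ s ∈ Icc 1 k,
        (iteratedDerivWithin (k - s + 1) f I a / (k - s)! * (iteratedDerivWithin s x I a / poch s) +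
          iteratedDerivWithin (k - s) f I a / (k - s)! *
            (iteratedDerivWithin (s + 1) x I a / poch s))) I a := by
  have hlt (m : ℕ) : (m : WithTop ℕ∞) < ((⊤ : ℕ∞) : WithTop ℕ∞) :=
    WithTop.coe_lt_coe.mpr (ENat.natCast_lt_top m)
  exact HasDerivWithinAt.fun_sum fun _ _ =>
    ((hasDerivWithinAt_iteratedDerivWithin hI hf (hlt _) ha).div_const _).mul
      ((hasDerivWithinAt_iteratedDerivWithin hI hx (hlt _) ha).div_const _)

lemma bfun_one (f x : ℝ → ℝ) (a : ℝ) : bfun I f x 1 a = 2 * f a * derivWithin x I a := by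
  simp only [bfun, Icc_self, sum_singleton, Nat.sub_self, iteratedDerivWithin_zero,
    iteratedDerivWithin_one, factorial_zero, cast_one, div_one, poch_one]
  ring

lemma opW_eq_bfun_add (n : ℕ) (f h : ℝ → ℝ) (a : ℝ) :
    OpW I n f h a = bfun I f h n a + iteratedDerivWithin n f I a / n ! * h a := by
  rw [OpW, bfun, sum_range_succ', sum_Icc_one_eq_sum_range]
  simp [poch_zero]

lemma bfun_natDegree_eq_neg_of_opW_eq_zero (hI : IsOpen I) {F : ℝ[X]} (hF : F.Monic)
    (x : ℝ → ℝ) {a : ℝ} (ha : a ∈ I) (hode : OpW I F.natDegree (fun t => F.eval t) x a = 0) :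
    bfun I (fun t => F.eval t) x F.natDegree a = -x a := by
  rw [opW_eq_bfun_add, iteratedDerivWithin_eval_natDegree hI F ha, hF.leadingCoeff, one_mul,
    div_self (cast_ne_zero.mpr (factorial_ne_zero _)), one_mul] at hode
  linarith

end Calculus

theorem stmt5_general (n : ℕ) (F : Polynomial ℝ) (hmonic : F.Monic)
    (hdeg : F.natDegree = n)
    (I : Set ℝ) (hIopen : IsOpen I)
    (x : ℝ → ℝ) (hx : ContDiffOn ℝ (⊤ : ℕ∞) x I)
    (hode : ∀ a ∈ I, OpW I n (fun t => F.eval t) x a = 0) :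
    (∀ a ∈ I, bfun I (fun t => F.eval t) x 1 a = 2 * F.eval a * derivWithin x I a) ∧
    (∀ k : ℕ, 1 ≤ k → k ≤ n - 1 → ∀ a ∈ I,
      derivWithin (bfun I (fun t => F.eval t) x k) I a =
        ((k : ℝ) + 1/2) * bfun I (fun t => F.eval t) x (k + 1) a -
          iteratedDerivWithin k (fun t => F.eval t) I a / (Nat.factorial k : ℝ) *
            derivWithin x I a) ∧
    (∀ a ∈ I, derivWithin (bfun I (fun t => F.eval t) x n) I a = - derivWithin x I a) := by
  subst hdeg
  have hI : UniqueDiffOn ℝ I := hIopen.uniqueDiffOn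
  have hF : ContDiffOn ℝ (⊤ : ℕ∞) (fun t => F.eval t) I := by
    simpa only [coe_aeval_eq_eval] using (F.contDiff_aeval (𝕜 := ℝ) (R := ℝ) _).contDiffOn
  refine ⟨fun a _ => bfun_one _ x a, fun k _ _ a ha => ?_, fun a ha => ?_⟩
  · rw [(hasDerivWithinAt_bfun hI hF hx k ha).derivWithin (hI a ha),
      sum_leibniz_terms_eq k (iteratedDerivWithin · _ I a) (iteratedDerivWithin · x I a),
      iteratedDerivWithin_one]
    rfl
  · have hb : Set.EqOn (bfun I (fun t => F.eval t) x F.natDegree) (-x) I := fun b hb =>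
      bfun_natDegree_eq_neg_of_opW_eq_zero hIopen hmonic x hb (hode b hb)
    rw [derivWithin_congr hb (hb ha), derivWithin.neg]

/-- Let `F` be a monic real polynomial of degree `n ≥ 2` and `x` a smooth
function on an open interval `I` with `Op_n[F]x = 0` on `I`. Then on `I`: `b₁ = 2 F x′`;
`b_k′ = (k + 1/2) b_{k+1} − (F^{(k)}/k!) x′` for `1 ≤ k ≤ n−1`; and `b_n′ = −x′`. -/
theorem stmt5 (n : ℕ) (hn : 2 ≤ n) (F : Polynomial ℝ) (hmonic : F.Monic)
    (hdeg : F.natDegree = n)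
    (I : Set ℝ) (hIopen : IsOpen I) (hIconn : I.OrdConnected)
    (x : ℝ → ℝ) (hx : ContDiffOn ℝ (⊤ : ℕ∞) x I)
    (hode : ∀ a ∈ I, OpW I n (fun t => F.eval t) x a = 0) :
    (∀ a ∈ I, bfun I (fun t => F.eval t) x 1 a = 2 * F.eval a * derivWithin x I a) ∧
    (∀ k : ℕ, 1 ≤ k → k ≤ n - 1 → ∀ a ∈ I,
      derivWithin (bfun I (fun t => F.eval t) x k) I a =
        ((k : ℝ) + 1/2) * bfun I (fun t => F.eval t) x (k + 1) a -
          iteratedDerivWithin k (fun t => F.eval t) I a / (Nat.factorial k : ℝ) *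
            derivWithin x I a) ∧
    (∀ a ∈ I, derivWithin (bfun I (fun t => F.eval t) x n) I a = - derivWithin x I a) :=
  stmt5_general n F hmonic hdeg I hIopen x hx hode
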